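/- arXiv:1810.09280 — 2 statements merged into one kernel-verified Lean document; each statement's English description precedes it below -/
import Mathlib

section
/- Consider the equation v_t = v³v_3 + 3v²v_1v_2 − x²v_1 + 3xv (so F = v³v_3 + 3v²v_1v_2 − x²v_1 + 3xv), on the domain v ≠ 0, with λ an additional parameter. Define the sl_2-valued functions A0(λ,x,v) = [[0, −1/v],[λ/(6v), 0]] and B0(λ,x,v,v_1,v_2) = [[x/6, v·v_2 + v_1² + x²/v + (2/3)λ],[(1/6)(v − λ·v·v_2 − λ·v_1²) − λx²/(6v) − λ²/9, −x/6]], and the scalar functions a(x,v) = x/v and b(x,v,v_1,v_2) = v·v_1 − x·(v·v_2 + v_1²) − x³/v. Then the following two identities hold identically on {v ≠ 0}: (I) D_x(b) − D_t(a) = 0; (II) D_x(B0) − D_t(A0) + [A0,B0] + a·∂B0/∂λ − b·∂A0/∂λ = 0 (an identity of 2×2 matrix-valued functions of (λ,x,t,v,v_1,v_2,v_3)). Equivalently, the pair A = A0 + a·∂_λ, B = B0 + b·∂_λ is a zero-curvature representation of this equation with values in the Lie algebra sl_2(ℂ[λ]) ⊕ ℂ∂_λ. -/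
/-!
Jet-space framework.  Jet coordinates: index `0` is `x`, index `1` is `t`, and
index `k+2` is `u_k`.  All functions on jet space are functions `Jet → V`
depending (via a `DependsOn` hypothesis) on finitely many coordinates.
-/

noncomputable section

/-- The space of jet coordinates. -/
abbrev Jet : Type := ℕ → ℂ

variable {V : Type*}

/-- Partial derivative of `f` with respect to the `i`-th jet coordinate. -/
def pd [NormedAddCommGroup V] [NormedSpace ℂ V] (i : ℕ) (f : Jet → V) (p : Jet) : V :=
  deriv (fun s => f (Function.update p i s)) (p i)

/-- `f` depends only on `x`, `t` and the variables `u_k` for `k < N`. -/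
def JetDependsOn (N : ℕ) (f : Jet → V) : Prop :=
  ∀ p q : Jet, p 0 = q 0 → p 1 = q 1 → (∀ k, k < N → p (k + 2) = q (k + 2)) → f p = f q

/-- Total `x`-derivative `D_x = ∂/∂x + Σ_{k<K} u_{k+1}·∂/∂u_k` (the bound `K` is chosen
at least as large as the number of `u`-variables on which the argument depends). -/
def Dx [NormedAddCommGroup V] [NormedSpace ℂ V] (K : ℕ) (f : Jet → V) (p : Jet) : V :=
  pd 0 f p + ∑ k ∈ Finset.range K, p (k + 3) • pd (k + 2) f p

/-- Iterated total derivative `D_x^k(F)` for `F = F(x,t,u_0,…,u_d)`. -/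
def DxIter (d : ℕ) (F : Jet → ℂ) : ℕ → Jet → ℂ
  | 0 => F
  | k + 1 => Dx (d + 1 + k) (DxIter d F k)

/-- Total `t`-derivative `D_t = ∂/∂t + Σ_{k<K} D_x^k(F)·∂/∂u_k` for the evolution
equation `u_t = F(x,t,u_0,…,u_d)`. -/
def Dt [NormedAddCommGroup V] [NormedSpace ℂ V] (d K : ℕ) (F : Jet → ℂ)
    (f : Jet → V) (p : Jet) : V :=
  pd 1 f p + ∑ k ∈ Finset.range K, DxIter d F k p • pd (k + 2) f p

/-- `f` is analytic at `p` as a function of the variables `(x,t,u_0,…,u_{N-1})`. -/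
def JetAnalyticAt [NormedAddCommGroup V] [NormedSpace ℂ V] (N : ℕ) (f : Jet → V)
    (p : Jet) : Prop :=
  AnalyticAt ℂ
    (fun v : ℂ × ℂ × (Fin N → ℂ) =>
      f (fun i => if i = 0 then v.1 else if i = 1 then v.2.1
        else if h : i - 2 < N then v.2.2 ⟨i - 2, h⟩ else p i))
    (p 0, p 1, fun k => p ((k : ℕ) + 2))

/-- `f` is analytic on `S` as a function of the variables `(x,t,u_0,…,u_{N-1})`. -/
def JetAnalyticOn [NormedAddCommGroup V] [NormedSpace ℂ V] (N : ℕ) (f : Jet → V)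
    (S : Set Jet) : Prop :=
  ∀ p ∈ S, JetAnalyticAt N f p

/-- The open polydisc centered at `a` with radii `r` in the coordinates
`x,t,u_0,…,u_{N-1}`; the remaining coordinates are unconstrained. -/
def PolyDisc (N : ℕ) (a : Jet) (r : ℕ → ℝ) : Set Jet :=
  {p : Jet | ∀ i, i < N + 2 → dist (p i) (a i) < r i}

attribute [local instance] Matrix.normedAddCommGroup Matrix.normedSpace

/-!
STATEMENT 13.  Jet coordinates: index `0` is `x`, index `1` is `t`, index `k+2` is
`v_k = ∂^k v/∂x^k`.  The equation is `v_t = v³v₃ + 3v²v₁v₂ − x²v₁ + 3xv`, and `λ` is an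
additional parameter (treated as a constant by `D_x`, `D_t`).
-/

/-- The right-hand side `F = v³v₃ + 3v²v₁v₂ − x²v₁ + 3xv`. -/
def F13 : Jet → ℂ := fun p =>
  (p 2) ^ 3 * p 5 + 3 * (p 2) ^ 2 * p 3 * p 4 - (p 0) ^ 2 * p 3 + 3 * p 0 * p 2

/-- The matrix part `A0(λ,x,v)` of the ZCR. -/
def A13 (l : ℂ) : Jet → Matrix (Fin 2) (Fin 2) ℂ := fun p =>
  !![0, -(1 / p 2); l / (6 * p 2), 0]

/-- The matrix part `B0(λ,x,v,v₁,v₂)` of the ZCR. -/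
def B13 (l : ℂ) : Jet → Matrix (Fin 2) (Fin 2) ℂ := fun p =>
  !![p 0 / 6, p 2 * p 4 + (p 3) ^ 2 + (p 0) ^ 2 / p 2 + (2 / 3) * l;
     (1 / 6) * (p 2 - l * p 2 * p 4 - l * (p 3) ^ 2) - l * (p 0) ^ 2 / (6 * p 2)
       - l ^ 2 / 9, -(p 0) / 6]

/-- The scalar function `a(x,v) = x/v` (the `∂_λ`-component of `A`). -/
def a13 : Jet → ℂ := fun p => p 0 / p 2

/-- The scalar function `b(x,v,v₁,v₂) = v·v₁ − x·(v·v₂ + v₁²) − x³/v`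
(the `∂_λ`-component of `B`). -/
def b13 : Jet → ℂ := fun p =>
  p 2 * p 3 - p 0 * (p 2 * p 4 + (p 3) ^ 2) - (p 0) ^ 3 / p 2

lemma hasDerivAt_mat2 {f : ℂ → Matrix (Fin 2) (Fin 2) ℂ} {a b c d x : ℂ}
    (h00 : HasDerivAt (fun s => f s 0 0) a x)
    (h01 : HasDerivAt (fun s => f s 0 1) b x)
    (h10 : HasDerivAt (fun s => f s 1 0) c x)
    (h11 : HasDerivAt (fun s => f s 1 1) d x) :
    HasDerivAt f !![a, b; c, d] x := by
  have : HasDerivAt (F := Fin 2 → Fin 2 → ℂ) (fun s i j => f s i j)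
      (fun i j => (!![a, b; c, d] : Matrix (Fin 2) (Fin 2) ℂ) i j) x := by
    rw [hasDerivAt_pi]; intro i; rw [hasDerivAt_pi]; intro j
    fin_cases i <;> fin_cases j <;> simpa using ‹_›
  exact this

lemma L1 (c0 c1 c2 c3 s d : ℂ) (hd : d = c1 + 2*c2*s + 3*c3*s^2) :
    HasDerivAt (fun z : ℂ => c0 + c1*z + c2*z^2 + c3*z^3) d s := by
  subst hd
  have := ((((hasDerivAt_id s).const_mul c1).const_add c0).add
    ((hasDerivAt_pow 2 s).const_mul c2)).add ((hasDerivAt_pow 3 s).const_mul c3)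
  exact this.congr_deriv (by push_cast; ring)

lemma L2 (c0 c1 c2 c3 s d : ℂ) (hs : s ≠ 0) (hd : d = c1 + 2*c2*s - c3/s^2) :
    HasDerivAt (fun z : ℂ => c0 + c1*z + c2*z^2 + c3/z) d s := by
  subst hd
  have := ((((hasDerivAt_id s).const_mul c1).const_add c0).add
    ((hasDerivAt_pow 2 s).const_mul c2)).add
    ((hasDerivAt_const s c3).div (hasDerivAt_id s) hs)
  exact this.congr_deriv (by simp only [id]; field_simp; ring)


set_option maxHeartbeats 2000000 in
/-- on the domain `v ≠ 0`, the pair `A = A0 + a·∂_λ`, `B = B0 + b·∂_λ`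
is a zero-curvature representation of `v_t = v³v₃ + 3v²v₁v₂ − x²v₁ + 3xv` with values in
`sl₂(ℂ[λ]) ⊕ ℂ∂_λ`; equivalently, the `∂_λ`-component identity
(I) `D_x(b) − D_t(a) = 0` and the matrix-component identity
(II) `D_x(B0) − D_t(A0) + [A0,B0] + a·∂B0/∂λ − b·∂A0/∂λ = 0` hold identically. -/
theorem statement13 :
    ∀ (l : ℂ) (p : Jet), p 2 ≠ 0 →
      (Dx 4 b13 p - Dt 3 4 F13 a13 p = 0) ∧
      (Dx 4 (B13 l) p - Dt 3 4 F13 (A13 l) p +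
        (A13 l p * B13 l p - B13 l p * A13 l p) +
        a13 p • deriv (fun mu => B13 mu p) l -
        b13 p • deriv (fun mu => A13 mu p) l = 0) := by
  intro l p hp
  -- scalar pds of b13
  have pdb0 : pd 0 b13 p = -(p 2 * p 4 + p 3 ^ 2) - 3 * p 0 ^ 2 / p 2 := by
    rw [pd]
    have e : (fun s => b13 (Function.update p 0 s)) =
        fun z => p 2 * p 3 + (-(p 2 * p 4 + p 3 ^ 2))*z + 0*z^2 + (-(1/p 2))*z^3 := by
      funext z; simp [b13, Function.update_apply]; try ring
    rw [e]; exact (L1 _ _ _ _ _ _ (by ring)).deriv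
  have pdb2 : pd 2 b13 p = p 3 - p 0 * p 4 + p 0 ^ 3 / p 2 ^ 2 := by
    rw [pd]
    have e : (fun s => b13 (Function.update p 2 s)) =
        fun z => (-(p 0 * p 3 ^ 2)) + (p 3 - p 0 * p 4)*z + 0*z^2 + (-(p 0^3))/z := by
      funext z; simp [b13, Function.update_apply]; try ring
    rw [e]; exact (L2 _ _ _ _ _ _ hp (by ring)).deriv
  have pdb3 : pd 3 b13 p = p 2 - 2 * p 0 * p 3 := by
    rw [pd]
    have e : (fun s => b13 (Function.update p 3 s)) =
        fun z => (-(p 0 * (p 2 * p 4)) - p 0 ^ 3/p 2) + (p 2)*z + (-(p 0))*z^2 + 0*z^3 := by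
      funext z; simp [b13, Function.update_apply]; try ring
    rw [e]; exact (L1 _ _ _ _ _ _ (by ring)).deriv
  have pdb4 : pd 4 b13 p = -(p 0 * p 2) := by
    rw [pd]
    have e : (fun s => b13 (Function.update p 4 s)) =
        fun z => (p 2 * p 3 - p 0 * p 3 ^ 2 - p 0 ^ 3/p 2) + (-(p 0 * p 2))*z + 0*z^2 + 0*z^3 := by
      funext z; simp [b13, Function.update_apply]; try ring
    rw [e]; exact (L1 _ _ _ _ _ _ (by ring)).deriv
  have pdb5 : pd 5 b13 p = 0 := by
    rw [pd]
    have e : (fun s => b13 (Function.update p 5 s)) = fun _ => b13 p := by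
      funext z; simp [b13, Function.update_apply]
    rw [e]; exact deriv_const _ _
  -- scalar pds of a13
  have pda1 : pd 1 a13 p = 0 := by
    rw [pd]
    have e : (fun s => a13 (Function.update p 1 s)) = fun _ => a13 p := by
      funext z; simp [a13, Function.update_apply]
    rw [e]; exact deriv_const _ _
  have pda2 : pd 2 a13 p = -(p 0 / p 2 ^ 2) := by
    rw [pd]
    have e : (fun s => a13 (Function.update p 2 s)) =
        fun z => 0 + 0*z + 0*z^2 + (p 0)/z := by
      funext z; simp [a13, Function.update_apply]; try ring
    rw [e]; exact (L2 _ _ _ _ _ _ hp (by ring)).deriv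
  have pda3 : pd 3 a13 p = 0 := by
    rw [pd]
    have e : (fun s => a13 (Function.update p 3 s)) = fun _ => a13 p := by
      funext z; simp [a13, Function.update_apply]
    rw [e]; exact deriv_const _ _
  have pda4 : pd 4 a13 p = 0 := by
    rw [pd]
    have e : (fun s => a13 (Function.update p 4 s)) = fun _ => a13 p := by
      funext z; simp [a13, Function.update_apply]
    rw [e]; exact deriv_const _ _
  have pda5 : pd 5 a13 p = 0 := by
    rw [pd]
    have e : (fun s => a13 (Function.update p 5 s)) = fun _ => a13 p := by
      funext z; simp [a13, Function.update_apply]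
    rw [e]; exact deriv_const _ _
  -- matrix pds of A13
  have pdA1 : pd 1 (A13 l) p = 0 := by
    rw [pd]
    have e : (fun s => A13 l (Function.update p 1 s)) = fun _ => A13 l p := by
      funext z; simp [A13, Function.update_apply]
    rw [e]; exact deriv_const _ _
  have pdA2 : pd 2 (A13 l) p = !![0, 1/p 2^2; -(l/(6*p 2^2)), 0] := by
    rw [pd]
    refine HasDerivAt.deriv (hasDerivAt_mat2 ?_ ?_ ?_ ?_)
    · have e : (fun s => A13 l (Function.update p 2 s) 0 0) = fun _ => (0:ℂ) := by
        funext z; simp [A13, Function.update_apply]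
      rw [e]; exact hasDerivAt_const _ _
    · have e : (fun s => A13 l (Function.update p 2 s) 0 1) =
          fun z => 0 + 0*z + 0*z^2 + (-1)/z := by
        funext z; simp [A13, Function.update_apply]; try ring
      rw [e]; exact L2 _ _ _ _ _ _ hp (by ring)
    · have e : (fun s => A13 l (Function.update p 2 s) 1 0) =
          fun z => 0 + 0*z + 0*z^2 + (l/6)/z := by
        funext z; simp [A13, Function.update_apply]; try ring
      rw [e]; exact L2 _ _ _ _ _ _ hp (by ring)
    · have e : (fun s => A13 l (Function.update p 2 s) 1 1) = fun _ => (0:ℂ) := by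
        funext z; simp [A13, Function.update_apply]
      rw [e]; exact hasDerivAt_const _ _
  have pdA3 : pd 3 (A13 l) p = 0 := by
    rw [pd]
    have e : (fun s => A13 l (Function.update p 3 s)) = fun _ => A13 l p := by
      funext z; simp [A13, Function.update_apply]
    rw [e]; exact deriv_const _ _
  have pdA4 : pd 4 (A13 l) p = 0 := by
    rw [pd]
    have e : (fun s => A13 l (Function.update p 4 s)) = fun _ => A13 l p := by
      funext z; simp [A13, Function.update_apply]
    rw [e]; exact deriv_const _ _
  have pdA5 : pd 5 (A13 l) p = 0 := by
    rw [pd]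
    have e : (fun s => A13 l (Function.update p 5 s)) = fun _ => A13 l p := by
      funext z; simp [A13, Function.update_apply]
    rw [e]; exact deriv_const _ _
  -- matrix pds of B13
  have pdB0 : pd 0 (B13 l) p =
      !![1/6, 2 * p 0 / p 2; -(l * p 0/(3 * p 2)), -(1/6)] := by
    rw [pd]
    refine HasDerivAt.deriv (hasDerivAt_mat2 ?_ ?_ ?_ ?_)
    · have e : (fun s => B13 l (Function.update p 0 s) 0 0) =
          fun z => 0 + (1/6)*z + 0*z^2 + 0*z^3 := by
        funext z; simp [B13, Function.update_apply]; try ring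
      rw [e]; exact L1 _ _ _ _ _ _ (by ring)
    · have e : (fun s => B13 l (Function.update p 0 s) 0 1) =
          fun z => (p 2 * p 4 + p 3 ^ 2 + (2/3)*l) + 0*z + (1/p 2)*z^2 + 0*z^3 := by
        funext z; simp [B13, Function.update_apply]; try ring
      rw [e]; exact L1 _ _ _ _ _ _ (by ring)
    · have e : (fun s => B13 l (Function.update p 0 s) 1 0) =
          fun z => ((1/6) * (p 2 - l * p 2 * p 4 - l * p 3 ^ 2) - l^2/9) + 0*z
            + (-(l/(6 * p 2)))*z^2 + 0*z^3 := by
        funext z; simp [B13, Function.update_apply]; try ring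
      rw [e]; exact L1 _ _ _ _ _ _ (by ring)
    · have e : (fun s => B13 l (Function.update p 0 s) 1 1) =
          fun z => 0 + (-(1/6))*z + 0*z^2 + 0*z^3 := by
        funext z; simp [B13, Function.update_apply]; try ring
      rw [e]; exact L1 _ _ _ _ _ _ (by ring)
  have pdB2 : pd 2 (B13 l) p =
      !![0, p 4 - p 0 ^ 2 / p 2 ^ 2;
         (1 - l * p 4)/6 + l * p 0 ^ 2/(6 * p 2 ^ 2), 0] := by
    rw [pd]
    refine HasDerivAt.deriv (hasDerivAt_mat2 ?_ ?_ ?_ ?_)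
    · have e : (fun s => B13 l (Function.update p 2 s) 0 0) = fun _ => p 0 / 6 := by
        funext z; simp [B13, Function.update_apply]
      rw [e]; exact hasDerivAt_const _ _
    · have e : (fun s => B13 l (Function.update p 2 s) 0 1) =
          fun z => (p 3 ^ 2 + (2/3)*l) + (p 4)*z + 0*z^2 + (p 0 ^ 2)/z := by
        funext z; simp [B13, Function.update_apply]; try ring
      rw [e]; exact L2 _ _ _ _ _ _ hp (by ring)
    · have e : (fun s => B13 l (Function.update p 2 s) 1 0) =
          fun z => (-(l * p 3 ^ 2)/6 - l^2/9) + ((1 - l * p 4)/6)*z + 0*z^2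
            + (-(l * p 0 ^ 2/6))/z := by
        funext z; simp [B13, Function.update_apply]; try ring
      rw [e]; exact L2 _ _ _ _ _ _ hp (by ring)
    · have e : (fun s => B13 l (Function.update p 2 s) 1 1) = fun _ => -(p 0) / 6 := by
        funext z; simp [B13, Function.update_apply]
      rw [e]; exact hasDerivAt_const _ _
  have pdB3 : pd 3 (B13 l) p = !![0, 2 * p 3; -(l * p 3/3), 0] := by
    rw [pd]
    refine HasDerivAt.deriv (hasDerivAt_mat2 ?_ ?_ ?_ ?_)
    · have e : (fun s => B13 l (Function.update p 3 s) 0 0) = fun _ => p 0 / 6 := by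
        funext z; simp [B13, Function.update_apply]
      rw [e]; exact hasDerivAt_const _ _
    · have e : (fun s => B13 l (Function.update p 3 s) 0 1) =
          fun z => (p 2 * p 4 + p 0 ^ 2/p 2 + (2/3)*l) + 0*z + 1*z^2 + 0*z^3 := by
        funext z; simp [B13, Function.update_apply]; try ring
      rw [e]; exact L1 _ _ _ _ _ _ (by ring)
    · have e : (fun s => B13 l (Function.update p 3 s) 1 0) =
          fun z => ((1/6) * (p 2 - l * p 2 * p 4) - l * p 0 ^ 2/(6 * p 2) - l^2/9)
            + 0*z + (-(l/6))*z^2 + 0*z^3 := by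
        funext z; simp [B13, Function.update_apply]; try ring
      rw [e]; exact L1 _ _ _ _ _ _ (by ring)
    · have e : (fun s => B13 l (Function.update p 3 s) 1 1) = fun _ => -(p 0) / 6 := by
        funext z; simp [B13, Function.update_apply]
      rw [e]; exact hasDerivAt_const _ _
  have pdB4 : pd 4 (B13 l) p = !![0, p 2; -(l * p 2/6), 0] := by
    rw [pd]
    refine HasDerivAt.deriv (hasDerivAt_mat2 ?_ ?_ ?_ ?_)
    · have e : (fun s => B13 l (Function.update p 4 s) 0 0) = fun _ => p 0 / 6 := by
        funext z; simp [B13, Function.update_apply]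
      rw [e]; exact hasDerivAt_const _ _
    · have e : (fun s => B13 l (Function.update p 4 s) 0 1) =
          fun z => (p 3 ^ 2 + p 0 ^ 2/p 2 + (2/3)*l) + (p 2)*z + 0*z^2 + 0*z^3 := by
        funext z; simp [B13, Function.update_apply]; try ring
      rw [e]; exact L1 _ _ _ _ _ _ (by ring)
    · have e : (fun s => B13 l (Function.update p 4 s) 1 0) =
          fun z => ((1/6) * (p 2 - l * p 3 ^ 2) - l * p 0 ^ 2/(6 * p 2) - l^2/9)
            + (-(l * p 2/6))*z + 0*z^2 + 0*z^3 := by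
        funext z; simp [B13, Function.update_apply]; try ring
      rw [e]; exact L1 _ _ _ _ _ _ (by ring)
    · have e : (fun s => B13 l (Function.update p 4 s) 1 1) = fun _ => -(p 0) / 6 := by
        funext z; simp [B13, Function.update_apply]
      rw [e]; exact hasDerivAt_const _ _
  have pdB5 : pd 5 (B13 l) p = 0 := by
    rw [pd]
    have e : (fun s => B13 l (Function.update p 5 s)) = fun _ => B13 l p := by
      funext z; simp [B13, Function.update_apply]
    rw [e]; exact deriv_const _ _
  -- lambda derivatives
  have dA : deriv (fun mu => A13 mu p) l = !![0, 0; 1/(6 * p 2), 0] := by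
    refine HasDerivAt.deriv (hasDerivAt_mat2 ?_ ?_ ?_ ?_)
    · have e : (fun mu => A13 mu p 0 0) = fun _ => (0:ℂ) := by
        funext z; simp [A13]
      rw [e]; exact hasDerivAt_const _ _
    · have e : (fun mu => A13 mu p 0 1) = fun _ => -(1/p 2) := by
        funext z; simp [A13]
      rw [e]; exact hasDerivAt_const _ _
    · have e : (fun mu => A13 mu p 1 0) =
          fun z => 0 + (1/(6 * p 2))*z + 0*z^2 + 0*z^3 := by
        funext z; simp [A13]; try ring
      rw [e]; exact L1 _ _ _ _ _ _ (by ring)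
    · have e : (fun mu => A13 mu p 1 1) = fun _ => (0:ℂ) := by
        funext z; simp [A13]
      rw [e]; exact hasDerivAt_const _ _
  have dB : deriv (fun mu => B13 mu p) l =
      !![0, 2/3; -(p 2 * p 4 + p 3 ^ 2)/6 - p 0 ^ 2/(6 * p 2) - 2 * l/9, 0] := by
    refine HasDerivAt.deriv (hasDerivAt_mat2 ?_ ?_ ?_ ?_)
    · have e : (fun mu => B13 mu p 0 0) = fun _ => p 0 / 6 := by
        funext z; simp [B13]
      rw [e]; exact hasDerivAt_const _ _
    · have e : (fun mu => B13 mu p 0 1) =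
          fun z => (p 2 * p 4 + p 3 ^ 2 + p 0 ^ 2/p 2) + (2/3)*z + 0*z^2 + 0*z^3 := by
        funext z; simp [B13]; try ring
      rw [e]; exact L1 _ _ _ _ _ _ (by ring)
    · have e : (fun mu => B13 mu p 1 0) =
          fun z => (p 2/6) + (-(p 2 * p 4 + p 3 ^ 2)/6 - p 0 ^ 2/(6 * p 2))*z
            + (-(1/9))*z^2 + 0*z^3 := by
        funext z; simp [B13]; try ring
      rw [e]; exact L1 _ _ _ _ _ _ (by ring)
    · have e : (fun mu => B13 mu p 1 1) = fun _ => -(p 0) / 6 := by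
        funext z; simp [B13]
      rw [e]; exact hasDerivAt_const _ _
  have h0 : DxIter 3 F13 0 = F13 := rfl
  constructor
  · rw [Dx, Dt]
    simp only [Finset.sum_range_succ, Finset.sum_range_zero, h0]
    rw [pdb0, pdb2, pdb3, pdb4, pdb5, pda1, pda2, pda3, pda4, pda5]
    simp only [smul_eq_mul, mul_zero, add_zero, zero_add]
    simp only [F13]; field_simp
    ring
  · rw [Dx, Dt]
    simp only [Finset.sum_range_succ, Finset.sum_range_zero, h0]
    rw [pdB0, pdB2, pdB3, pdB4, pdB5, pdA1, pdA2, pdA3, pdA4, pdA5, dA, dB]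
    simp only [smul_zero, add_zero, zero_add]
    ext i j
    fin_cases i <;> fin_cases j <;>
      simp only [A13, B13, F13, a13, b13, Matrix.mul_apply, Fin.sum_univ_two,
        Matrix.smul_apply, Matrix.add_apply, Matrix.sub_apply, smul_eq_mul,
        Matrix.zero_apply, Matrix.cons_val', Matrix.cons_val_zero, Matrix.cons_val_one,
        Matrix.head_cons, Matrix.head_fin_const, Matrix.empty_val',
        Matrix.cons_val_fin_one, Fin.isValue, Fin.zero_eta, Fin.mk_one, Matrix.of_apply]
    all_goals try field_simp
    all_goals try ring_nf
    all_goals try field_simp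
    all_goals try ring
end
end

section
/- Let e_1, e_2, e_3 ∈ ℂ be pairwise distinct. Let E = ℂ[v_1,v_2,v_3]/I, where I is the ideal generated by the polynomials v_i² − v_j² + e_i − e_j (1 ≤ i, j ≤ 3), let v̂_i ∈ E be the image of v_i, and set z = v̂_1² + e_1 = v̂_2² + e_2 = v̂_3² + e_3 ∈ E. Let so_3(ℂ) have a basis α_1, α_2, α_3 with [α_1,α_2] = α_3, [α_2,α_3] = α_1, [α_3,α_1] = α_2, and consider the complex Lie algebra so_3(ℂ) ⊗_ℂ E with bracket [p⊗f, q⊗g] = [p,q]⊗fg. Let R = R_{e_1,e_2,e_3} be the Lie subalgebra of so_3(ℂ) ⊗_ℂ E generated by the three elements α_1⊗v̂_1, α_2⊗v̂_2, α_3⊗v̂_3. Then the elements α_i ⊗ v̂_i·z^l and α_i ⊗ v̂_j·v̂_k·z^l (for i,j,k ∈ {1,2,3} with j < k, j ≠ i ≠ k, and l ∈ ℤ_{≥0}) form a ℂ-basis of R; in particular, R is infinite-dimensional over ℂ. -/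
noncomputable section

open MvPolynomial

/-- The ideal of `ℂ[v₁,v₂,v₃]` generated by the polynomials
`v_i² − v_j² + e_i − e_j` (`1 ≤ i,j ≤ 3`). -/
def curveIdeal (e : Fin 3 → ℂ) : Ideal (MvPolynomial (Fin 3) ℂ) :=
  Ideal.span (Set.range fun ij : Fin 3 × Fin 3 =>
    (X ij.1 : MvPolynomial (Fin 3) ℂ) ^ 2 - X ij.2 ^ 2 + C (e ij.1) - C (e ij.2))

/-- The coordinate ring `E = ℂ[v₁,v₂,v₃]/I` of the affine (elliptic) curve. -/
abbrev Ecur (e : Fin 3 → ℂ) := MvPolynomial (Fin 3) ℂ ⧸ curveIdeal e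

/-- `v̂_i ∈ E`, the image of the variable `v_i`. -/
def vhat (e : Fin 3 → ℂ) (i : Fin 3) : Ecur e := Ideal.Quotient.mk (curveIdeal e) (X i)

/-- `z = v̂₁² + e₁ (= v̂₂² + e₂ = v̂₃² + e₃) ∈ E`. -/
def zed (e : Fin 3 → ℂ) : Ecur e := vhat e 0 ^ 2 + algebraMap ℂ (Ecur e) (e 0)

lemma vhat_sq (e : Fin 3 → ℂ) (i : Fin 3) :
    vhat e i ^ 2 = zed e - algebraMap ℂ (Ecur e) (e i) := by
  have h : Ideal.Quotient.mk (curveIdeal e)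
      ((X i : MvPolynomial (Fin 3) ℂ) ^ 2 - X 0 ^ 2 + C (e i) - C (e 0)) = 0 := by
    rw [Ideal.Quotient.eq_zero_iff_mem]
    exact Ideal.subset_span ⟨(i, 0), rfl⟩
  have : vhat e i ^ 2 - vhat e 0 ^ 2 + algebraMap ℂ (Ecur e) (e i)
      - algebraMap ℂ (Ecur e) (e 0) = 0 := by
    rw [← h]; simp [vhat, IsScalarTower.algebraMap_apply ℂ (MvPolynomial (Fin 3) ℂ) (Ecur e), Ideal.Quotient.algebraMap_eq, MvPolynomial.algebraMap_eq, map_sub, map_add, map_pow]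
  rw [zed]; linear_combination this

/-- The bracket of `so₃(ℂ) ⊗_ℂ E` in the coordinates of a basis `α₁, α₂, α₃` of
`so₃(ℂ)` with `[α₁,α₂] = α₃`, `[α₂,α₃] = α₁`, `[α₃,α₁] = α₂` (an element
`Σ_i α_i ⊗ f_i` is recorded as the triple `(f₀,f₁,f₂) : Fin 3 → E`, with
`[p⊗f, q⊗g] = [p,q]⊗fg`). -/
def so3br {e : Fin 3 → ℂ} (f g : Fin 3 → Ecur e) : Fin 3 → Ecur e :=
  ![f 1 * g 2 - f 2 * g 1, f 2 * g 0 - f 0 * g 2, f 0 * g 1 - f 1 * g 0]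

variable {e : Fin 3 → ℂ}

lemma so3br_apply (f g : Fin 3 → Ecur e) :
    so3br f g 0 = f 1 * g 2 - f 2 * g 1 ∧ so3br f g 1 = f 2 * g 0 - f 0 * g 2 ∧
    so3br f g 2 = f 0 * g 1 - f 1 * g 0 := by
  refine ⟨rfl, rfl, rfl⟩

lemma br01 (f g : Ecur e) :
    so3br (Pi.single 0 f) (Pi.single (1 : Fin 3) g) = (Pi.single 2 (f * g) : Fin 3 → Ecur e) := by
  funext x; fin_cases x <;> simp [so3br, Pi.single_apply]

lemma br12 (f g : Ecur e) :
    so3br (Pi.single 1 f) (Pi.single (2 : Fin 3) g) = (Pi.single 0 (f * g) : Fin 3 → Ecur e) := by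
  funext x; fin_cases x <;> simp [so3br, Pi.single_apply]

lemma br20 (f g : Ecur e) :
    so3br (Pi.single 2 f) (Pi.single (0 : Fin 3) g) = (Pi.single 1 (f * g) : Fin 3 → Ecur e) := by
  funext x; fin_cases x <;> simp [so3br, Pi.single_apply]

lemma br_same (i : Fin 3) (f g : Ecur e) :
    so3br (Pi.single i f) (Pi.single i g) = 0 := by
  funext x; fin_cases i <;> fin_cases x <;> simp [so3br, Pi.single_apply]

lemma br_antisymm (f g : Fin 3 → Ecur e) : so3br g f = - so3br f g := by
  funext x; fin_cases x <;> simp [so3br] <;> ring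

lemma br_add_left (f f' g : Fin 3 → Ecur e) :
    so3br (f + f') g = so3br f g + so3br f' g := by
  funext x; fin_cases x <;> simp [so3br] <;> ring

lemma br_add_right (f g g' : Fin 3 → Ecur e) :
    so3br f (g + g') = so3br f g + so3br f g' := by
  funext x; fin_cases x <;> simp [so3br] <;> ring

lemma br_smul_left (c : ℂ) (f g : Fin 3 → Ecur e) :
    so3br (c • f) g = c • so3br f g := by
  funext x; fin_cases x <;> simp [so3br, smul_sub, smul_mul_assoc, mul_smul_comm]

lemma br_smul_right (c : ℂ) (f g : Fin 3 → Ecur e) :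
    so3br f (c • g) = c • so3br f g := by
  funext x; fin_cases x <;> simp [so3br, smul_sub, smul_mul_assoc, mul_smul_comm]

lemma prod_erase0 (f : Fin 3 → Ecur e) :
    (∏ j ∈ Finset.univ.erase 0, f j) = f 1 * f 2 := by
  have : (Finset.univ.erase (0 : Fin 3)) = {1, 2} := by decide
  rw [this]; simp [Finset.prod_insert, Finset.mem_singleton]

lemma prod_erase1 (f : Fin 3 → Ecur e) :
    (∏ j ∈ Finset.univ.erase 1, f j) = f 0 * f 2 := by
  have : (Finset.univ.erase (1 : Fin 3)) = {0, 2} := by decide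
  rw [this]; simp [Finset.prod_insert, Finset.mem_singleton]

lemma prod_erase2 (f : Fin 3 → Ecur e) :
    (∏ j ∈ Finset.univ.erase 2, f j) = f 0 * f 1 := by
  have : (Finset.univ.erase (2 : Fin 3)) = {0, 1} := by decide
  rw [this]; simp [Finset.prod_insert, Finset.mem_singleton]

def Ael (e : Fin 3 → ℂ) (i : Fin 3) (l : ℕ) : Fin 3 → Ecur e :=
  Pi.single i (vhat e i * zed e ^ l)

def Bel (e : Fin 3 → ℂ) (i : Fin 3) (l : ℕ) : Fin 3 → Ecur e :=
  Pi.single i ((∏ j ∈ Finset.univ.erase i, vhat e j) * zed e ^ l)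

lemma mem_closure (S : Submodule ℂ (Fin 3 → Ecur e))
    (hgen : ∀ i, Pi.single i (vhat e i) ∈ S)
    (hbr : ∀ x ∈ S, ∀ y ∈ S, so3br x y ∈ S) :
    ∀ l : ℕ, (∀ i, Ael e i l ∈ S) ∧ (∀ i, Bel e i l ∈ S) := by
  have hA0 : ∀ i, Ael e i 0 ∈ S := fun i => by simpa [Ael] using hgen i
  have hBstep : ∀ m : ℕ, (∀ i, Ael e i m ∈ S) → ∀ i, Bel e i m ∈ S := by
    intro m hA i
    fin_cases i
    · show Bel e 0 m ∈ S
      have h : Bel e 0 m = so3br (Ael e 1 m) (Ael e 2 0) := by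
        rw [Ael, Ael, br12, Bel, prod_erase0]; congr 1; ring
      rw [h]; exact hbr _ (hA 1) _ (hA0 2)
    · show Bel e 1 m ∈ S
      have h : Bel e 1 m = so3br (Ael e 2 m) (Ael e 0 0) := by
        rw [Ael, Ael, br20, Bel, prod_erase1]; congr 1; ring
      rw [h]; exact hbr _ (hA 2) _ (hA0 0)
    · show Bel e 2 m ∈ S
      have h : Bel e 2 m = so3br (Ael e 0 m) (Ael e 1 0) := by
        rw [Ael, Ael, br01, Bel, prod_erase2]; congr 1; ring
      rw [h]; exact hbr _ (hA 0) _ (hA0 1)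
  intro l
  induction l with
  | zero => exact ⟨hA0, hBstep 0 hA0⟩
  | succ l ih =>
    obtain ⟨hA, hB⟩ := ih
    have hA' : ∀ i, Ael e i (l + 1) ∈ S := by
      intro i
      fin_cases i
      · show Ael e 0 (l + 1) ∈ S
        have h : Ael e 0 (l + 1) = so3br (Bel e 1 l) (Ael e 2 0) + e 2 • Ael e 0 l := by
          rw [Bel, prod_erase1, Ael, Ael, Ael, br12, ← Pi.single_smul, ← Pi.single_add]
          refine congrArg _ ?_
          rw [← algebraMap_smul (Ecur e) , smul_eq_mul]
          linear_combination (-(vhat e 0 * zed e ^ l)) * vhat_sq e 2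
        rw [h]; exact S.add_mem (hbr _ (hB 1) _ (hA0 2)) (S.smul_mem _ (hA 0))
      · show Ael e 1 (l + 1) ∈ S
        have h : Ael e 1 (l + 1) = so3br (Bel e 2 l) (Ael e 0 0) + e 0 • Ael e 1 l := by
          rw [Bel, prod_erase2, Ael, Ael, Ael, br20, ← Pi.single_smul, ← Pi.single_add]
          refine congrArg _ ?_
          rw [← algebraMap_smul (Ecur e) , smul_eq_mul]
          linear_combination (-(vhat e 1 * zed e ^ l)) * vhat_sq e 0
        rw [h]; exact S.add_mem (hbr _ (hB 2) _ (hA0 0)) (S.smul_mem _ (hA 1))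
      · show Ael e 2 (l + 1) ∈ S
        have h : Ael e 2 (l + 1) = so3br (Bel e 0 l) (Ael e 1 0) + e 1 • Ael e 2 l := by
          rw [Bel, prod_erase0, Ael, Ael, Ael, br01, ← Pi.single_smul, ← Pi.single_add]
          refine congrArg _ ?_
          rw [← algebraMap_smul (Ecur e) , smul_eq_mul]
          linear_combination (-(vhat e 2 * zed e ^ l)) * vhat_sq e 1
        rw [h]; exact S.add_mem (hbr _ (hB 0) _ (hA0 1)) (S.smul_mem _ (hA 2))
    exact ⟨hA', hBstep _ hA'⟩

/-- `R = R_{e₁,e₂,e₃}`: the Lie subalgebra (over `ℂ`) of `so₃(ℂ) ⊗_ℂ E` generated by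
the elements `α_i ⊗ v̂_i`, `i = 1,2,3`: the smallest `ℂ`-subspace containing them and
closed under the bracket. -/
def lieGenR (e : Fin 3 → ℂ) : Submodule ℂ (Fin 3 → Ecur e) :=
  sInf {S : Submodule ℂ (Fin 3 → Ecur e) |
    (∀ i : Fin 3, Pi.single i (vhat e i) ∈ S) ∧ ∀ x ∈ S, ∀ y ∈ S, so3br x y ∈ S}

/-- The claimed basis of `R`: the elements `α_i ⊗ v̂_i·z^l` (indices `(i,false,l)`) and
`α_i ⊗ v̂_j·v̂_k·z^l` with `{j,k}` the two indices distinct from `i`, `j < k`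
(indices `(i,true,l)`). -/
def basR (e : Fin 3 → ℂ) : Fin 3 × Bool × ℕ → (Fin 3 → Ecur e) :=
  fun x =>
    match x with
    | (i, false, l) => Pi.single i (vhat e i * zed e ^ l)
    | (i, true, l) => Pi.single i ((∏ j ∈ Finset.univ.erase i, vhat e j) * zed e ^ l)


lemma basR_false (i : Fin 3) (l : ℕ) : basR e (i, false, l) = Ael e i l := rfl
lemma basR_true (i : Fin 3) (l : ℕ) : basR e (i, true, l) = Bel e i l := rfl

lemma basR_mem (idx : Fin 3 × Bool × ℕ) : basR e idx ∈ lieGenR e := by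
  rw [lieGenR, Submodule.mem_sInf]
  rintro S ⟨hgen, hbr⟩
  obtain ⟨i, b, l⟩ := idx
  cases b
  · rw [basR_false]; exact (mem_closure S hgen hbr l).1 i
  · rw [basR_true]; exact (mem_closure S hgen hbr l).2 i

def Wsp (e : Fin 3 → ℂ) : Submodule ℂ (Fin 3 → Ecur e) :=
  Submodule.span ℂ (Set.range (basR e))

lemma bas_mem_W (idx : Fin 3 × Bool × ℕ) : basR e idx ∈ Wsp e :=
  Submodule.subset_span ⟨idx, rfl⟩

lemma basR_eq (i : Fin 3) (b : Bool) (l : ℕ) :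
    basR e (i, b, l) = Pi.single i ((bif b then (∏ j ∈ Finset.univ.erase i, vhat e j) else vhat e i) * zed e ^ l) := by
  cases b <;> rfl

lemma brmem01ff (a d : ℕ) : so3br (basR e (0, false, a)) (basR e (1, false, d)) ∈ Wsp e := by
  have h : so3br (basR e (0, false, a)) (basR e (1, false, d)) = basR e (2, true, a + d) := by
    rw [basR_false, basR_false, Ael, Ael, br01, basR_true, Bel, prod_erase2]
    refine congrArg _ ?_; ring
  rw [h]; exact bas_mem_W _

lemma brmem01ft (a d : ℕ) : so3br (basR e (0, false, a)) (basR e (1, true, d)) ∈ Wsp e := by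
  have h : so3br (basR e (0, false, a)) (basR e (1, true, d))
      = basR e (2, false, a + d + 1) - e 0 • basR e (2, false, a + d) := by
    rw [basR_false, Ael, basR_true, Bel, prod_erase1, br01, basR_false, basR_false, Ael, Ael,
      ← Pi.single_smul, ← Pi.single_sub]
    refine congrArg _ ?_
    rw [← algebraMap_smul (Ecur e), smul_eq_mul]
    linear_combination (vhat e 2 * zed e ^ (a + d)) * vhat_sq e 0
  rw [h]
  exact sub_mem (bas_mem_W _) (Submodule.smul_mem _ _ (bas_mem_W _))

lemma brmem01tf (a d : ℕ) : so3br (basR e (0, true, a)) (basR e (1, false, d)) ∈ Wsp e := by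
  have h : so3br (basR e (0, true, a)) (basR e (1, false, d))
      = basR e (2, false, a + d + 1) - e 1 • basR e (2, false, a + d) := by
    rw [basR_true, Bel, basR_false, Ael, prod_erase0, br01, basR_false, basR_false, Ael, Ael,
      ← Pi.single_smul, ← Pi.single_sub]
    refine congrArg _ ?_
    rw [← algebraMap_smul (Ecur e), smul_eq_mul]
    linear_combination (vhat e 2 * zed e ^ (a + d)) * vhat_sq e 1
  rw [h]
  exact sub_mem (bas_mem_W _) (Submodule.smul_mem _ _ (bas_mem_W _))

lemma brmem01tt (a d : ℕ) : so3br (basR e (0, true, a)) (basR e (1, true, d)) ∈ Wsp e := by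
  have h : so3br (basR e (0, true, a)) (basR e (1, true, d))
      = basR e (2, true, a + d + 1) - e 2 • basR e (2, true, a + d) := by
    rw [basR_true, Bel, basR_true, Bel, prod_erase0, prod_erase1, br01, basR_true, basR_true, Bel, Bel, prod_erase2,
      ← Pi.single_smul, ← Pi.single_sub]
    refine congrArg _ ?_
    rw [← algebraMap_smul (Ecur e), smul_eq_mul]
    linear_combination (vhat e 0 * vhat e 1 * zed e ^ (a + d)) * vhat_sq e 2
  rw [h]
  exact sub_mem (bas_mem_W _) (Submodule.smul_mem _ _ (bas_mem_W _))

lemma brmem12ff (a d : ℕ) : so3br (basR e (1, false, a)) (basR e (2, false, d)) ∈ Wsp e := by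
  have h : so3br (basR e (1, false, a)) (basR e (2, false, d)) = basR e (0, true, a + d) := by
    rw [basR_false, basR_false, Ael, Ael, br12, basR_true, Bel, prod_erase0]
    refine congrArg _ ?_; ring
  rw [h]; exact bas_mem_W _

lemma brmem12ft (a d : ℕ) : so3br (basR e (1, false, a)) (basR e (2, true, d)) ∈ Wsp e := by
  have h : so3br (basR e (1, false, a)) (basR e (2, true, d))
      = basR e (0, false, a + d + 1) - e 1 • basR e (0, false, a + d) := by
    rw [basR_false, Ael, basR_true, Bel, prod_erase2, br12, basR_false, basR_false, Ael, Ael,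
      ← Pi.single_smul, ← Pi.single_sub]
    refine congrArg _ ?_
    rw [← algebraMap_smul (Ecur e), smul_eq_mul]
    linear_combination (vhat e 0 * zed e ^ (a + d)) * vhat_sq e 1
  rw [h]
  exact sub_mem (bas_mem_W _) (Submodule.smul_mem _ _ (bas_mem_W _))

lemma brmem12tf (a d : ℕ) : so3br (basR e (1, true, a)) (basR e (2, false, d)) ∈ Wsp e := by
  have h : so3br (basR e (1, true, a)) (basR e (2, false, d))
      = basR e (0, false, a + d + 1) - e 2 • basR e (0, false, a + d) := by
    rw [basR_true, Bel, basR_false, Ael, prod_erase1, br12, basR_false, basR_false, Ael, Ael,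
      ← Pi.single_smul, ← Pi.single_sub]
    refine congrArg _ ?_
    rw [← algebraMap_smul (Ecur e), smul_eq_mul]
    linear_combination (vhat e 0 * zed e ^ (a + d)) * vhat_sq e 2
  rw [h]
  exact sub_mem (bas_mem_W _) (Submodule.smul_mem _ _ (bas_mem_W _))

lemma brmem12tt (a d : ℕ) : so3br (basR e (1, true, a)) (basR e (2, true, d)) ∈ Wsp e := by
  have h : so3br (basR e (1, true, a)) (basR e (2, true, d))
      = basR e (0, true, a + d + 1) - e 0 • basR e (0, true, a + d) := by
    rw [basR_true, Bel, basR_true, Bel, prod_erase1, prod_erase2, br12, basR_true, basR_true, Bel, Bel, prod_erase0,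
      ← Pi.single_smul, ← Pi.single_sub]
    refine congrArg _ ?_
    rw [← algebraMap_smul (Ecur e), smul_eq_mul]
    linear_combination (vhat e 1 * vhat e 2 * zed e ^ (a + d)) * vhat_sq e 0
  rw [h]
  exact sub_mem (bas_mem_W _) (Submodule.smul_mem _ _ (bas_mem_W _))

lemma brmem20ff (a d : ℕ) : so3br (basR e (2, false, a)) (basR e (0, false, d)) ∈ Wsp e := by
  have h : so3br (basR e (2, false, a)) (basR e (0, false, d)) = basR e (1, true, a + d) := by
    rw [basR_false, basR_false, Ael, Ael, br20, basR_true, Bel, prod_erase1]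
    refine congrArg _ ?_; ring
  rw [h]; exact bas_mem_W _

lemma brmem20ft (a d : ℕ) : so3br (basR e (2, false, a)) (basR e (0, true, d)) ∈ Wsp e := by
  have h : so3br (basR e (2, false, a)) (basR e (0, true, d))
      = basR e (1, false, a + d + 1) - e 2 • basR e (1, false, a + d) := by
    rw [basR_false, Ael, basR_true, Bel, prod_erase0, br20, basR_false, basR_false, Ael, Ael,
      ← Pi.single_smul, ← Pi.single_sub]
    refine congrArg _ ?_
    rw [← algebraMap_smul (Ecur e), smul_eq_mul]
    linear_combination (vhat e 1 * zed e ^ (a + d)) * vhat_sq e 2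
  rw [h]
  exact sub_mem (bas_mem_W _) (Submodule.smul_mem _ _ (bas_mem_W _))

lemma brmem20tf (a d : ℕ) : so3br (basR e (2, true, a)) (basR e (0, false, d)) ∈ Wsp e := by
  have h : so3br (basR e (2, true, a)) (basR e (0, false, d))
      = basR e (1, false, a + d + 1) - e 0 • basR e (1, false, a + d) := by
    rw [basR_true, Bel, basR_false, Ael, prod_erase2, br20, basR_false, basR_false, Ael, Ael,
      ← Pi.single_smul, ← Pi.single_sub]
    refine congrArg _ ?_
    rw [← algebraMap_smul (Ecur e), smul_eq_mul]
    linear_combination (vhat e 1 * zed e ^ (a + d)) * vhat_sq e 0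
  rw [h]
  exact sub_mem (bas_mem_W _) (Submodule.smul_mem _ _ (bas_mem_W _))

lemma brmem20tt (a d : ℕ) : so3br (basR e (2, true, a)) (basR e (0, true, d)) ∈ Wsp e := by
  have h : so3br (basR e (2, true, a)) (basR e (0, true, d))
      = basR e (1, true, a + d + 1) - e 1 • basR e (1, true, a + d) := by
    rw [basR_true, Bel, basR_true, Bel, prod_erase2, prod_erase0, br20, basR_true, basR_true, Bel, Bel, prod_erase1,
      ← Pi.single_smul, ← Pi.single_sub]
    refine congrArg _ ?_
    rw [← algebraMap_smul (Ecur e), smul_eq_mul]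
    linear_combination (vhat e 2 * vhat e 0 * zed e ^ (a + d)) * vhat_sq e 1
  rw [h]
  exact sub_mem (bas_mem_W _) (Submodule.smul_mem _ _ (bas_mem_W _))

lemma br_bas_mem (x y : Fin 3 × Bool × ℕ) :
    so3br (basR e x) (basR e y) ∈ Wsp e := by
  obtain ⟨i, b, a⟩ := x
  obtain ⟨j, c, d⟩ := y
  fin_cases i <;> fin_cases j
  · rw [basR_eq, basR_eq, br_same]; exact zero_mem _
  · cases b <;> cases c
    · exact brmem01ff a d
    · exact brmem01ft a d
    · exact brmem01tf a d
    · exact brmem01tt a d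
  · cases b <;> cases c
    · rw [br_antisymm]; exact neg_mem (brmem20ff d a)
    · rw [br_antisymm]; exact neg_mem (brmem20tf d a)
    · rw [br_antisymm]; exact neg_mem (brmem20ft d a)
    · rw [br_antisymm]; exact neg_mem (brmem20tt d a)
  · cases b <;> cases c
    · rw [br_antisymm]; exact neg_mem (brmem01ff d a)
    · rw [br_antisymm]; exact neg_mem (brmem01tf d a)
    · rw [br_antisymm]; exact neg_mem (brmem01ft d a)
    · rw [br_antisymm]; exact neg_mem (brmem01tt d a)
  · rw [basR_eq, basR_eq, br_same]; exact zero_mem _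
  · cases b <;> cases c
    · exact brmem12ff a d
    · exact brmem12ft a d
    · exact brmem12tf a d
    · exact brmem12tt a d
  · cases b <;> cases c
    · exact brmem20ff a d
    · exact brmem20ft a d
    · exact brmem20tf a d
    · exact brmem20tt a d
  · cases b <;> cases c
    · rw [br_antisymm]; exact neg_mem (brmem12ff d a)
    · rw [br_antisymm]; exact neg_mem (brmem12tf d a)
    · rw [br_antisymm]; exact neg_mem (brmem12ft d a)
    · rw [br_antisymm]; exact neg_mem (brmem12tt d a)
  · rw [basR_eq, basR_eq, br_same]; exact zero_mem _

lemma Wsp_br_closed : ∀ x ∈ Wsp e, ∀ y ∈ Wsp e, so3br x y ∈ Wsp e := by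
  intro x hx y hy
  induction hx using Submodule.span_induction generalizing y with
  | mem x hx =>
    obtain ⟨ix, rfl⟩ := hx
    induction hy using Submodule.span_induction with
    | mem y hy => obtain ⟨iy, rfl⟩ := hy; exact br_bas_mem ix iy
    | zero =>
      have : so3br (basR e ix) 0 = 0 := by
        funext t; fin_cases t <;> simp [so3br]
      rw [this]; exact zero_mem _
    | add y z _ _ h1 h2 => rw [br_add_right]; exact add_mem h1 h2
    | smul c y _ h1 => rw [br_smul_right]; exact Submodule.smul_mem _ _ h1
  | zero =>
    have : so3br 0 y = 0 := by funext t; fin_cases t <;> simp [so3br]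
    rw [this]; exact zero_mem _
  | add x z _ _ h1 h2 => rw [br_add_left]; exact add_mem (h1 y hy) (h2 y hy)
  | smul c x _ h1 => rw [br_smul_left]; exact Submodule.smul_mem _ _ (h1 y hy)

lemma span_eq_lieGenR : Wsp e = lieGenR e := by
  apply le_antisymm
  · rw [Wsp, Submodule.span_le]
    rintro _ ⟨idx, rfl⟩
    exact basR_mem idx
  · refine sInf_le ⟨?_, Wsp_br_closed⟩
    intro i
    simpa [basR_false, Ael] using bas_mem_W (i, false, 0)

/-! ### Evaluation into the algebraic closure of `ℂ(t)` -/

abbrev Acl : Type := AlgebraicClosure (RatFunc ℂ)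

def tA : Acl := algebraMap (RatFunc ℂ) Acl RatFunc.X

lemma tA_transcendental : Transcendental ℂ tA := by
  have h1 : Transcendental ℂ (RatFunc.X : RatFunc ℂ) := by
    rw [← RatFunc.algebraMap_X]
    exact (transcendental_algebraMap_iff (RatFunc.algebraMap_injective ℂ)).2
      (Polynomial.transcendental_X ℂ)
  exact (transcendental_algebraMap_iff (algebraMap (RatFunc ℂ) Acl).injective).2 h1

def sqA (e : Fin 3 → ℂ) (i : Fin 3) : Acl :=
  Classical.choose (IsAlgClosed.exists_pow_nat_eq (tA - algebraMap ℂ Acl (e i)) (n := 2) two_pos)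

lemma sqA_spec (i : Fin 3) : sqA e i ^ 2 = tA - algebraMap ℂ Acl (e i) :=
  Classical.choose_spec (IsAlgClosed.exists_pow_nat_eq (tA - algebraMap ℂ Acl (e i)) (n := 2) two_pos)

lemma sqA_ne_zero (i : Fin 3) : sqA e i ≠ 0 := by
  intro h
  have hs := sqA_spec (e := e) i
  rw [h] at hs
  have h2 : tA = algebraMap ℂ Acl (e i) := by linear_combination -hs
  exact tA_transcendental (h2 ▸ isAlgebraic_algebraMap (e i))

def evalE (e : Fin 3 → ℂ) (ε : Fin 3 → Acl) (hε : ∀ i, ε i ^ 2 = 1) : Ecur e →ₐ[ℂ] Acl :=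
  Ideal.Quotient.liftₐ (curveIdeal e) (MvPolynomial.aeval (fun i => ε i * sqA e i))
    (by
      intro a ha
      have hle : curveIdeal e ≤
          RingHom.ker (MvPolynomial.aeval (R := ℂ) (fun i => ε i * sqA e i)).toRingHom := by
        rw [curveIdeal, Ideal.span_le]
        rintro _ ⟨⟨i, j⟩, rfl⟩
        simp only [SetLike.mem_coe, RingHom.mem_ker, AlgHom.toRingHom_eq_coe, RingHom.coe_coe,
          map_add, map_sub, map_pow, MvPolynomial.aeval_X, MvPolynomial.aeval_C]
        rw [mul_pow, mul_pow, hε i, hε j, sqA_spec, sqA_spec]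
        ring
      exact hle ha)

lemma evalE_vhat (ε : Fin 3 → Acl) (hε : ∀ i, ε i ^ 2 = 1) (j : Fin 3) :
    evalE e ε hε (vhat e j) = ε j * sqA e j := by
  rw [evalE, vhat]
  exact (Ideal.Quotient.lift_mk _ _ _).trans (by simp)

lemma evalE_zed (ε : Fin 3 → Acl) (hε : ∀ i, ε i ^ 2 = 1) :
    evalE e ε hε (zed e) = tA := by
  rw [zed, map_add, map_pow, evalE_vhat, AlgHom.commutes, mul_pow, hε 0, sqA_spec]
  ring

lemma evalE_bas (ε : Fin 3 → Acl) (hε : ∀ i, ε i ^ 2 = 1) (j : Fin 3) (c : Bool) (m : ℕ)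
    (i : Fin 3) :
    evalE e ε hε (basR e (j, c, m) i) =
      (if i = j then
        (bif c then ∏ k ∈ Finset.univ.erase j, (ε k * sqA e k) else ε j * sqA e j) * tA ^ m
      else 0) := by
  rw [basR_eq, Pi.single_apply]
  split
  · rw [map_mul, map_pow, evalE_zed]
    cases c
    · simp only [Bool.cond_false, evalE_vhat]
    · simp only [Bool.cond_true, map_prod, evalE_vhat]
  · exact map_zero _

lemma pow_tA_indep : LinearIndependent ℂ (fun m : ℕ => tA ^ m) := by
  rw [linearIndependent_iff']
  intro s c hsum m hm
  have hp : (∑ n ∈ s, Polynomial.C (c n) * Polynomial.X ^ n : Polynomial ℂ) = 0 := by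
    apply transcendental_iff.1 tA_transcendental
    rw [map_sum]
    rw [← hsum]
    refine Finset.sum_congr rfl fun n _ => ?_
    rw [map_mul, Polynomial.aeval_C, Polynomial.aeval_X_pow, Algebra.smul_def]
  have := congrArg (fun p => Polynomial.coeff p m) hp
  simp only [Polynomial.finset_sum_coeff, Polynomial.coeff_C_mul, Polynomial.coeff_X_pow,
    Polynomial.coeff_zero] at this
  rw [Finset.sum_eq_single_of_mem m hm] at this
  · simpa using this
  · intro n _ hn
    rw [if_neg (Ne.symm hn), mul_zero]

set_option maxHeartbeats 1000000 in
lemma basR_indep : LinearIndependent ℂ (basR e) := by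
  haveI : CharZero Acl := charZero_of_injective_algebraMap (algebraMap ℂ Acl).injective
  rw [linearIndependent_iff']
  intro s g hsum x hx
  obtain ⟨i, b, l⟩ := x
  have hp2 : ∀ j, ((fun _ : Fin 3 => (1 : Acl)) j) ^ 2 = 1 := fun j => one_pow 2
  have hm2 : ∀ j, ((fun j : Fin 3 => if j = i then (-1 : Acl) else 1) j) ^ 2 = 1 := by
    intro j; by_cases h : j = i <;> simp [h]
  set ψp := evalE e (fun _ => 1) hp2 with hψp
  set ψm := evalE e (fun j => if j = i then -1 else 1) hm2 with hψm
  set u : Bool → Acl := fun c =>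
    bif c then ∏ k ∈ Finset.univ.erase i, sqA e k else sqA e i with hu
  have hco : ∑ x ∈ s, g x • basR e x i = 0 := by
    have := congrFun hsum i
    simpa [Finset.sum_apply, Pi.smul_apply] using this
  have hP : ∑ x ∈ s, g x • ψp (basR e x i) = 0 := by
    have := congrArg ψp hco
    simpa [map_sum, map_smul] using this
  have hM : ∑ x ∈ s, g x • ψm (basR e x i) = 0 := by
    have := congrArg ψm hco
    simpa [map_sum, map_smul] using this
  set T : Bool → Acl := fun c =>
    ∑ x ∈ s.filter (fun x => x.1 = i ∧ x.2.1 = c), g x • tA ^ x.2.2 with hT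
  have hsplitP : ∀ x : Fin 3 × Bool × ℕ, g x • ψp (basR e x i) =
      (if x.1 = i ∧ x.2.1 = false then u false * (g x • tA ^ x.2.2) else 0) +
      (if x.1 = i ∧ x.2.1 = true then u true * (g x • tA ^ x.2.2) else 0) := by
    rintro ⟨j, c, m⟩
    rw [hψp, evalE_bas]
    by_cases hij : (i : Fin 3) = j
    · subst hij
      cases c
      · simp [hu, mul_smul_comm]
      · simp [hu, mul_smul_comm]
    · have hji : ¬ (j = i) := fun h => hij h.symm
      simp [if_neg hij, hji]
  have hsplitM : ∀ x : Fin 3 × Bool × ℕ, g x • ψm (basR e x i) =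
      -(if x.1 = i ∧ x.2.1 = false then u false * (g x • tA ^ x.2.2) else 0) +
      (if x.1 = i ∧ x.2.1 = true then u true * (g x • tA ^ x.2.2) else 0) := by
    rintro ⟨j, c, m⟩
    rw [hψm, evalE_bas]
    by_cases hij : (i : Fin 3) = j
    · subst hij
      cases c
      · simp [hu, mul_smul_comm]
      · simp only [if_pos rfl, Bool.cond_true, and_true, and_false, if_neg, if_pos]
        have hprod : (∏ k ∈ Finset.univ.erase i, ((if k = i then (-1 : Acl) else 1) * sqA e k))
            = ∏ k ∈ Finset.univ.erase i, sqA e k := by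
          refine Finset.prod_congr rfl fun k hk => ?_
          rw [if_neg (Finset.mem_erase.1 hk).1, one_mul]
        rw [hprod]
        simp [hu, mul_smul_comm]
    · have hji : ¬ (j = i) := fun h => hij h.symm
      simp [if_neg hij, hji]
  rw [Finset.sum_congr rfl fun x _ => hsplitP x, Finset.sum_add_distrib,
    ← Finset.sum_filter, ← Finset.sum_filter, ← Finset.mul_sum, ← Finset.mul_sum] at hP
  rw [Finset.sum_congr rfl fun x _ => hsplitM x, Finset.sum_add_distrib,
    Finset.sum_neg_distrib, ← Finset.sum_filter, ← Finset.sum_filter,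
    ← Finset.mul_sum, ← Finset.mul_sum] at hM
  have hu_ne : ∀ c, u c ≠ 0 := by
    intro c
    cases c
    · simp only [hu, Bool.cond_false]; exact sqA_ne_zero i
    · simp only [hu, Bool.cond_true]; exact Finset.prod_ne_zero_iff.2 fun k _ => sqA_ne_zero k
  have hTc : ∀ c, T c = 0 := by
    intro c
    cases c
    · have h2 : (2 : Acl) * (u false * T false) = 0 := by
        rw [hT]; linear_combination hP - hM
      have := (mul_eq_zero.1 h2).resolve_left two_ne_zero
      exact (mul_eq_zero.1 this).resolve_left (hu_ne false)
    · have h2 : (2 : Acl) * (u true * T true) = 0 := by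
        rw [hT]; linear_combination hP + hM
      have := (mul_eq_zero.1 h2).resolve_left two_ne_zero
      exact (mul_eq_zero.1 this).resolve_left (hu_ne true)
  -- conclude using independence of powers of tA
  have hmem : (i, b, l) ∈ s.filter (fun x => x.1 = i ∧ x.2.1 = b) :=
    Finset.mem_filter.2 ⟨hx, rfl, rfl⟩
  have hxeq : ∀ x ∈ s.filter (fun x => x.1 = i ∧ x.2.1 = b), x = (i, b, x.2.2) := by
    intro x hx'
    obtain ⟨-, h1, h2⟩ := Finset.mem_filter.1 hx'
    exact Prod.ext h1 (Prod.ext h2 rfl)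
  have hinj : ∀ x ∈ s.filter (fun x => x.1 = i ∧ x.2.1 = b),
      ∀ y ∈ s.filter (fun x => x.1 = i ∧ x.2.1 = b),
      x.2.2 = y.2.2 → x = y := by
    intro x hx' y hy' hxy
    rw [hxeq x hx', hxeq y hy', hxy]
  have himg : ∑ m ∈ (s.filter (fun x => x.1 = i ∧ x.2.1 = b)).image (fun x => x.2.2),
      g (i, b, m) • tA ^ m = 0 := by
    rw [Finset.sum_image hinj]
    rw [show (0 : Acl) = T b from (hTc b).symm, hT]
    refine Finset.sum_congr rfl fun x hx' => ?_
    rw [← hxeq x hx']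
  have := linearIndependent_iff'.1 pow_tA_indep _ _ himg l
    (Finset.mem_image_of_mem _ hmem)
  exact this
/-- for pairwise distinct `e₁,e₂,e₃`, the elements `α_i ⊗ v̂_i·z^l` and
`α_i ⊗ v̂_j·v̂_k·z^l` (`j < k`, `j ≠ i ≠ k`, `l ≥ 0`) form a `ℂ`-basis of
`R = R_{e₁,e₂,e₃}`; in particular `R` is infinite-dimensional over `ℂ`. -/
theorem statement16 (e : Fin 3 → ℂ) (he : ∀ i j, i ≠ j → e i ≠ e j) :
    (∀ idx, basR e idx ∈ lieGenR e) ∧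
    LinearIndependent ℂ (basR e) ∧
    Submodule.span ℂ (Set.range (basR e)) = lieGenR e ∧
    ¬ Module.Finite ℂ ↥(lieGenR e) := by
  refine ⟨fun idx => basR_mem idx, basR_indep, span_eq_lieGenR, ?_⟩
  intro hfin
  have hv : LinearIndependent ℂ (fun x => (⟨basR e x, basR_mem x⟩ : lieGenR e)) :=
    LinearIndependent.of_comp (lieGenR e).subtype basR_indep
  haveI : Finite (Fin 3 × Bool × ℕ) := hv.finite
  exact not_finite (Fin 3 × Bool × ℕ)
end
end
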